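/- Let p be prime, α > 0, r < 0. With K_α as above and C := -∫_{1<|y|_p≤p^{-r}} K_α(y) dy ∈ (0,1), the Laplace transform G_r(s) contains the singular term -(p^r/s)·C as s → 0⁺ (with s real), and hence lim_{s→0⁺} |G_r(s)| = ∞. Consequently, F(0) := G_r(0)/(1+G_r(0)) interpreted as lim_{s→0⁺} G_r(s)/(1+G_r(s)) equals 1 (recurrence of the associated Markov process). -/

import Mathlib

open MeasureTheory Filter Topology

noncomputable section

variable (p : ℕ) [Fact p.Prime]

instance : MeasurableSpace ℚ_[p] := borel _
instance : BorelSpace ℚ_[p] := ⟨rfl⟩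

/-- The closed unit ball of `ℚ_[p]` (i.e. `ℤ_p`) as a positive compact set. -/
def padicUnitBall : TopologicalSpace.PositiveCompacts ℚ_[p] where
  carrier := Metric.closedBall 0 1
  isCompact' := isCompact_closedBall 0 1
  interior_nonempty' := ⟨0, mem_interior_iff_mem_nhds.2 (Metric.closedBall_mem_nhds 0 one_pos)⟩

/-- Haar measure on `ℚ_[p]` normalized so that `ℤ_p` has measure 1. -/
def μp : Measure ℚ_[p] := Measure.addHaarMeasure (padicUnitBall p)

/-- The heat kernel `Z_r(x,t) = ∫ χ(-xξ) e^{-t(⟨ξ⟩^α - p^{rα})} dξ`, where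
`⟨ξ⟩ = max(|ξ|_p, p^r)`. -/
def heatKernel (χ : AddChar ℚ_[p] ℂ) (r : ℤ) (α t : ℝ) (x : ℚ_[p]) : ℂ :=
  ∫ ξ, χ (-(x*ξ)) *
    Complex.exp (-((t * ((max ‖ξ‖ ((p:ℝ)^r)) ^ α - (p:ℝ) ^ ((r:ℝ)*α)) : ℝ) : ℂ)) ∂(μp p)

/-- The kernel `K_α(y)`, supported on the ball `|y|_p ≤ p^{-r}`. -/
def Kfun (r : ℤ) (α : ℝ) (y : ℚ_[p]) : ℝ :=
  if ‖y‖ ≤ (p:ℝ)^(-r) then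
    (1 - (p:ℝ)^α)/(1 - (p:ℝ)^(-α-1)) * ‖y‖ ^ (-α-1)
      + (p:ℝ)^((r:ℝ)*(α+1)) * (1 - (p:ℝ)^α)/(1 - (p:ℝ)^(α+1))
  else 0

/-- `u(x,t) = ∫_{|ξ|_p ≤ 1} χ(-xξ) e^{-t(⟨ξ⟩^α - p^{rα})} dξ`, the solution with initial
datum the indicator of the unit ball. -/
def uball (χ : AddChar ℚ_[p] ℂ) (r : ℤ) (α t : ℝ) (x : ℚ_[p]) : ℂ :=
  ∫ ξ in {ξ : ℚ_[p] | ‖ξ‖ ≤ 1}, χ (-(x*ξ)) *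
    Complex.exp (-((t * ((max ‖ξ‖ ((p:ℝ)^r)) ^ α - (p:ℝ) ^ ((r:ℝ)*α)) : ℝ) : ℂ)) ∂(μp p)

/-- The survival probability `S(t) = ∫_{|x|_p ≤ 1} u(x,t) dx`. -/
def Sfun (χ : AddChar ℚ_[p] ℂ) (r : ℤ) (α t : ℝ) : ℂ :=
  ∫ x in {x : ℚ_[p] | ‖x‖ ≤ 1}, uball p χ r α t x ∂(μp p)

/-- The solution `u(x,t) = (Z_r(·,t) ∗ φ)(x)` of the Cauchy problem, with `u(x,0) = φ(x)`. -/
def sol (χ : AddChar ℚ_[p] ℂ) (r : ℤ) (α : ℝ) (φ : ℚ_[p] → ℂ) (t : ℝ) (x : ℚ_[p]) : ℂ :=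
  if t = 0 then φ x else ∫ y, heatKernel p χ r α t (x-y) * φ y ∂(μp p)

/-- The pseudodifferential operator `H^α` with symbol `⟨ξ⟩^α - p^{rα}`:
`H^α g = 𝓕⁻¹[(⟨ξ⟩^α - p^{rα}) 𝓕g]`. -/
def Hop (χ : AddChar ℚ_[p] ℂ) (r : ℤ) (α : ℝ) (g : ℚ_[p] → ℂ) (x : ℚ_[p]) : ℂ :=
  ∫ ξ, χ (-(x*ξ)) * (((max ‖ξ‖ ((p:ℝ)^r)) ^ α - (p:ℝ)^((r:ℝ)*α) : ℝ) : ℂ) *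
    (∫ y, χ (ξ*y) * g y ∂(μp p)) ∂(μp p)

/-- The Laplace transform `G_r(s)` of the density `g(t)`. -/
def Gr (χ : AddChar ℚ_[p] ℂ) (r : ℤ) (α : ℝ) (s : ℝ) : ℂ :=
  ∫ y in {y : ℚ_[p] | 1 < ‖y‖ ∧ ‖y‖ ≤ (p:ℝ)^(-r)}, (Kfun p r α y : ℂ) *
    ∫ ξ in {ξ : ℚ_[p] | ‖ξ‖ ≤ 1},
      χ (-(ξ*y)) / ((s:ℂ) + (((max ‖ξ‖ ((p:ℝ)^r)) ^ α - (p:ℝ)^((r:ℝ)*α) : ℝ) : ℂ)) ∂(μp p) ∂(μp p)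

/-!
On the ball `B_r = {‖ξ‖ ≤ p ^ r}` the symbol `⟨ξ⟩ ^ α - p ^ (r α)` vanishes and, as
`‖y‖ ≤ p ^ (-r)`, `χ (-ξ y) = 1`; so this ball contributes exactly `μ(B_r) / s` to the inner
integral. Off it `‖ξ‖ ≥ p ^ (r + 1)`, so the symbol is at least `p ^ ((r + 1) α) - p ^ (r α) > 0`
and the rest of the inner integral is bounded uniformly in `s > 0`. Hence
`G_r(s) = μ(B_r) (∫ K_α) / s + O(1)`, and `∫ K_α < 0` because
`K_α ≤ p ^ (r (α + 1)) (1 - p ^ α) < 0` on the annulus. Thus `‖G_r(s)‖ → ∞`,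
and `G_r / (1 + G_r) = 1 - (1 + G_r)⁻¹ → 1`.
-/

open Metric Bornology

section Asymptotics

lemma tendsto_cobounded_of_norm_sub_le {ι E : Type*} [SeminormedAddCommGroup E] {l : Filter ι}
    {f g : ι → E} (hg : Tendsto g l (cobounded E)) {M : ℝ} (hfg : ∀ᶠ x in l, ‖f x - g x‖ ≤ M) :
    Tendsto f l (cobounded E) := by
  rw [← tendsto_norm_atTop_iff_cobounded] at hg ⊢
  refine tendsto_atTop_mono' l ?_ (tendsto_atTop_add_const_right l (-M) hg)
  filter_upwards [hfg] with x hx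
  linarith [norm_sub_norm_le (g x) (f x), norm_sub_rev (g x) (f x)]

lemma tendsto_div_one_add_self_of_tendsto_cobounded {ι 𝕜 : Type*} [NormedField 𝕜]
    {l : Filter ι} {G : ι → 𝕜} (h : Tendsto G l (cobounded 𝕜)) :
    Tendsto (fun x => G x / (1 + G x)) l (𝓝 1) := by
  have h1 : Tendsto (fun x => 1 + G x) l (cobounded 𝕜) := (tendsto_const_add_cobounded 1).comp h
  have h2 : Tendsto (fun x => 1 - (1 + G x)⁻¹) l (𝓝 1) := by
    simpa using tendsto_const_nhds.sub (tendsto_inv₀_cobounded.comp h1)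
  refine h2.congr' ?_
  filter_upwards [h1.eventually_ne_cobounded 0] with x hx
  field_simp
  ring

lemma tendsto_ofReal_div_nhdsGT_zero_cobounded {a : ℝ} (ha : a ≠ 0) :
    Tendsto (fun s : ℝ => ((a / s : ℝ) : ℂ)) (𝓝[>] 0) (cobounded ℂ) := by
  rw [← tendsto_norm_atTop_iff_cobounded]
  refine (tendsto_inv_nhdsGT_zero.const_mul_atTop (abs_pos.2 ha)).congr' ?_
  filter_upwards [self_mem_nhdsWithin] with s (hs : 0 < s)
  rw [Complex.norm_real, Real.norm_eq_abs, abs_div, abs_of_pos hs, div_eq_mul_inv]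

end Asymptotics

lemma one_lt_natCast_of_prime (p : ℕ) [Fact p.Prime] : (1 : ℝ) < p :=
  Nat.one_lt_cast.2 (Fact.out : p.Prime).one_lt

section AddChar

variable {p : ℕ} [Fact p.Prime] {χ : AddChar ℚ_[p] ℂ} (hχ : ∀ y : ℚ_[p], ‖y‖ ≤ 1 → χ y = 1)
include hχ

lemma norm_addChar_eq_one (z : ℚ_[p]) : ‖χ z‖ = 1 := by
  obtain ⟨k, hk⟩ := pow_unbounded_of_one_lt ‖z‖ (one_lt_natCast_of_prime p)
  have hpk : 0 < (p : ℝ) ^ k := pow_pos (by linarith [one_lt_natCast_of_prime p]) k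
  have : χ z ^ (p ^ k) = 1 := by
    rw [← AddChar.map_nsmul_eq_pow, nsmul_eq_mul]
    apply hχ
    rw [norm_mul, Nat.cast_pow, Padic.norm_p_pow, zpow_neg, zpow_natCast]
    exact inv_mul_le_one_of_le₀ hk.le hpk.le
  exact Complex.norm_eq_one_of_pow_eq_one this (pow_ne_zero _ (Fact.out : p.Prime).ne_zero)

lemma continuous_addChar : Continuous χ := by
  refine continuous_iff_continuousAt.2 fun x => (continuousAt_const (y := χ x)).congr ?_
  filter_upwards [closedBall_mem_nhds x one_pos] with z hz
  rw [← add_sub_cancel x z, AddChar.map_add_eq_mul, hχ _ (mem_closedBall_iff_norm.1 hz), mul_one]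

end AddChar

section Symbol

variable (p : ℕ) [Fact p.Prime]

def heatSymbol (r : ℤ) (α : ℝ) (ξ : ℚ_[p]) : ℝ :=
  (max ‖ξ‖ ((p : ℝ) ^ r)) ^ α - (p : ℝ) ^ ((r : ℝ) * α)

variable {p} (r : ℤ) {α : ℝ}

lemma continuous_heatSymbol : Continuous (heatSymbol p r α) := by
  refine (Continuous.rpow_const (continuous_norm.max continuous_const) fun ξ => Or.inl ?_).sub
    continuous_const
  exact (lt_max_of_lt_right (zpow_pos (by linarith [one_lt_natCast_of_prime p]) r)).ne'

lemma heatSymbol_nonneg (hα : 0 ≤ α) (ξ : ℚ_[p]) : 0 ≤ heatSymbol p r α ξ := by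
  rw [heatSymbol, sub_nonneg, Real.rpow_intCast_mul (Nat.cast_nonneg p)]
  exact Real.rpow_le_rpow (zpow_nonneg (Nat.cast_nonneg p) r) (le_max_right _ _) hα

lemma heatSymbol_eq_zero {ξ : ℚ_[p]} (hξ : ‖ξ‖ ≤ (p : ℝ) ^ r) : heatSymbol p r α ξ = 0 := by
  rw [heatSymbol, max_eq_right hξ, ← Real.rpow_intCast_mul (Nat.cast_nonneg p), sub_self]

lemma heatSymbol_gap_pos (hα : 0 < α) :
    0 < ((p : ℝ) ^ (r + 1)) ^ α - (p : ℝ) ^ ((r : ℝ) * α) := by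
  rw [sub_pos, Real.rpow_intCast_mul (Nat.cast_nonneg p)]
  exact Real.rpow_lt_rpow (zpow_nonneg (Nat.cast_nonneg p) r)
    (zpow_lt_zpow_right₀ (one_lt_natCast_of_prime p) (lt_add_one r)) hα

/-- Since `‖ξ‖` only takes the values `p ^ k`, the symbol stays away from `0` off the ball
where it vanishes. -/
lemma heatSymbol_gap_le (hα : 0 ≤ α) {ξ : ℚ_[p]} (hξ : (p : ℝ) ^ r < ‖ξ‖) :
    ((p : ℝ) ^ (r + 1)) ^ α - (p : ℝ) ^ ((r : ℝ) * α) ≤ heatSymbol p r α ξ := by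
  have h : (p : ℝ) ^ (r + 1) ≤ ‖ξ‖ :=
    not_lt.1 fun h => hξ.not_ge ((Padic.norm_le_pow_iff_norm_lt_pow_add_one ξ r).2 h)
  exact sub_le_sub_right (Real.rpow_le_rpow (zpow_nonneg (Nat.cast_nonneg p) _)
    (h.trans (le_max_left _ _)) hα) _

end Symbol

instance (p : ℕ) [Fact p.Prime] : (μp p).IsAddHaarMeasure := by unfold μp; infer_instance

section Resolvent

variable {p : ℕ} [Fact p.Prime]

def resolventIntegrand (χ : AddChar ℚ_[p] ℂ) (r : ℤ) (α s : ℝ) (y ξ : ℚ_[p]) : ℂ :=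
  χ (-(ξ * y)) / ((s : ℂ) + (heatSymbol p r α ξ : ℂ))

variable {χ : AddChar ℚ_[p] ℂ} (hχ : ∀ y : ℚ_[p], ‖y‖ ≤ 1 → χ y = 1) (r : ℤ) {α s : ℝ}
include hχ

lemma norm_resolventIntegrand (hα : 0 ≤ α) (hs : 0 < s) (y ξ : ℚ_[p]) :
    ‖resolventIntegrand χ r α s y ξ‖ = (s + heatSymbol p r α ξ)⁻¹ := by
  rw [resolventIntegrand, norm_div, norm_addChar_eq_one hχ, ← Complex.ofReal_add,
    Complex.norm_real, Real.norm_eq_abs, abs_of_pos (by linarith [heatSymbol_nonneg r hα ξ]),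
    one_div]

lemma continuous_resolventIntegrand (hα : 0 ≤ α) (hs : 0 < s) :
    Continuous (Function.uncurry (resolventIntegrand χ r α s)) := by
  refine ((continuous_addChar hχ).comp (continuous_snd.mul continuous_fst).neg).div
    (continuous_const.add (Complex.continuous_ofReal.comp
      ((continuous_heatSymbol r).comp continuous_snd))) fun q => ?_
  rw [← Complex.ofReal_add, Complex.ofReal_ne_zero]
  linarith [heatSymbol_nonneg r hα q.2]

lemma resolventIntegrand_eq_inv {y ξ : ℚ_[p]} (hy : ‖y‖ ≤ (p : ℝ) ^ (-r))
    (hξ : ‖ξ‖ ≤ (p : ℝ) ^ r) : resolventIntegrand χ r α s y ξ = (s : ℂ)⁻¹ := by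
  have hp : (0 : ℝ) < p := by linarith [one_lt_natCast_of_prime p]
  have hχ1 : χ (-(ξ * y)) = 1 := hχ _ <| by
    calc ‖-(ξ * y)‖ = ‖ξ‖ * ‖y‖ := by rw [norm_neg, norm_mul]
      _ ≤ (p : ℝ) ^ r * (p : ℝ) ^ (-r) := mul_le_mul hξ hy (norm_nonneg _) (zpow_nonneg hp.le r)
      _ = 1 := by rw [← zpow_add₀ hp.ne', add_neg_cancel, zpow_zero]
  rw [resolventIntegrand, hχ1, heatSymbol_eq_zero r hξ, Complex.ofReal_zero, add_zero, one_div]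

lemma norm_setIntegral_resolventIntegrand_sub_le (hr : r ≤ 0) (hα : 0 < α) (hs : 0 < s)
    {y : ℚ_[p]} (hy : ‖y‖ ≤ (p : ℝ) ^ (-r)) :
    ‖∫ ξ in closedBall 0 1, resolventIntegrand χ r α s y ξ ∂(μp p)
        - (((μp p).real (closedBall 0 ((p : ℝ) ^ r)) / s : ℝ) : ℂ)‖
      ≤ (((p : ℝ) ^ (r + 1)) ^ α - (p : ℝ) ^ ((r : ℝ) * α))⁻¹
          * (μp p).real (closedBall 0 1 \ closedBall 0 ((p : ℝ) ^ r)) := by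
  have hsub : closedBall (0 : ℚ_[p]) ((p : ℝ) ^ r) ⊆ closedBall 0 1 :=
    closedBall_subset_closedBall (zpow_le_one_of_nonpos₀ (one_lt_natCast_of_prime p).le hr)
  have hint : IntegrableOn (resolventIntegrand χ r α s y) (closedBall 0 1) (μp p) :=
    ((continuous_resolventIntegrand hχ r hα.le hs).comp
      (continuous_const.prodMk continuous_id)).continuousOn.integrableOn_compact
      (isCompact_closedBall 0 1)
  have hsingular : ∫ ξ in closedBall 0 ((p : ℝ) ^ r), resolventIntegrand χ r α s y ξ ∂(μp p)
      = (((μp p).real (closedBall 0 ((p : ℝ) ^ r)) / s : ℝ) : ℂ) := by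
    rw [setIntegral_congr_fun measurableSet_closedBall fun ξ hξ =>
      resolventIntegrand_eq_inv hχ r hy (mem_closedBall_zero_iff.1 hξ), setIntegral_const,
      Complex.real_smul]
    push_cast
    rfl
  rw [← hsingular, ← setIntegral_sdiff measurableSet_closedBall hint hsub]
  refine norm_setIntegral_le_of_norm_le_const
    ((measure_mono Set.sdiff_subset).trans_lt measure_closedBall_lt_top) fun ξ hξ => ?_
  have hgap := heatSymbol_gap_le r hα.le (not_le.1 (mt mem_closedBall_zero_iff.2 hξ.2))
  rw [norm_resolventIntegrand hχ r hα.le hs]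
  exact inv_anti₀ (heatSymbol_gap_pos r hα) (by linarith)

end Resolvent

section Kernel

variable {p : ℕ} [Fact p.Prime] (r : ℤ) {α : ℝ}

lemma measurable_Kfun : Measurable (Kfun p r α) :=
  Measurable.ite (measurableSet_le measurable_norm measurable_const) (by fun_prop)
    measurable_const

lemma abs_Kfun_le {y : ℚ_[p]} (hα : 0 < α) (hy : 1 ≤ ‖y‖) :
    |Kfun p r α y| ≤ |(1 - (p : ℝ) ^ α) / (1 - (p : ℝ) ^ (-α - 1))|
      + |(p : ℝ) ^ ((r : ℝ) * (α + 1)) * (1 - (p : ℝ) ^ α) / (1 - (p : ℝ) ^ (α + 1))| := by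
  rw [Kfun]
  split_ifs
  · refine (abs_add_le _ _).trans (add_le_add_left ?_ _)
    rw [abs_mul, abs_of_nonneg (Real.rpow_nonneg (norm_nonneg y) _)]
    exact mul_le_of_le_one_right (abs_nonneg _)
      (Real.rpow_le_one_of_one_le_of_nonpos hy (by linarith))
  · simp only [abs_zero]
    positivity

/-- `Kfun` increases with `‖y‖` and its value on the outer sphere `‖y‖ = p ^ (-r)` is
`p ^ (r (α + 1)) (1 - p ^ α)`. -/
lemma Kfun_le_of_norm_le (hα : 0 < α) {y : ℚ_[p]} (hy0 : 0 < ‖y‖) (hy : ‖y‖ ≤ (p : ℝ) ^ (-r)) :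
    Kfun p r α y ≤ (p : ℝ) ^ ((r : ℝ) * (α + 1)) * (1 - (p : ℝ) ^ α) := by
  have hp := one_lt_natCast_of_prime p
  rw [Kfun, if_pos hy]
  set P := (p : ℝ) ^ ((r : ℝ) * (α + 1))
  set q := (p : ℝ) ^ (α + 1)
  have hpα : 1 < (p : ℝ) ^ α := Real.one_lt_rpow hp hα
  have hq : 1 < q := Real.one_lt_rpow hp (by linarith)
  have hq' : (p : ℝ) ^ (-α - 1) = q⁻¹ := by rw [← Real.rpow_neg (by linarith)]; ring_nf
  have hP : P ≤ ‖y‖ ^ (-α - 1) := by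
    have h := Real.rpow_le_rpow_of_nonpos hy0 hy (by linarith : -α - 1 ≤ 0)
    rwa [← Real.rpow_intCast_mul (by linarith), Int.cast_neg,
      show -(r : ℝ) * (-α - 1) = r * (α + 1) by ring] at h
  have hA : (1 - (p : ℝ) ^ α) / (1 - q⁻¹) ≤ 0 :=
    div_nonpos_of_nonpos_of_nonneg (by linarith) (sub_nonneg.2 (inv_le_one_of_one_le₀ hq.le))
  have hsum : (1 - (p : ℝ) ^ α) / (1 - q⁻¹) * P + P * (1 - (p : ℝ) ^ α) / (1 - q)
      = P * (1 - (p : ℝ) ^ α) := by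
    have : q - 1 ≠ 0 := by linarith
    rw [inv_eq_one_div, one_sub_div (by linarith), ← neg_sub q 1]
    field_simp
    ring
  rw [hq']
  linarith [mul_le_mul_of_nonpos_left hP hA]

end Kernel

section Annulus

variable (p : ℕ) [Fact p.Prime] (r : ℤ)

def padicAnnulus : Set ℚ_[p] := {y | 1 < ‖y‖ ∧ ‖y‖ ≤ (p : ℝ) ^ (-r)}

lemma measurableSet_padicAnnulus : MeasurableSet (padicAnnulus p r) :=
  (measurableSet_lt measurable_const measurable_norm).inter
    (measurableSet_le measurable_norm measurable_const)

lemma padicAnnulus_subset_closedBall : padicAnnulus p r ⊆ closedBall 0 ((p : ℝ) ^ (-r)) :=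
  fun _ hy => mem_closedBall_zero_iff.2 hy.2

lemma measure_padicAnnulus_lt_top : μp p (padicAnnulus p r) < ⊤ :=
  (measure_mono (padicAnnulus_subset_closedBall p r)).trans_lt measure_closedBall_lt_top

/-- The annulus contains the open ball of radius `1` around `p⁻¹`, on which `‖y‖ = p`. -/
lemma measure_padicAnnulus_pos (hr : r < 0) : 0 < μp p (padicAnnulus p r) := by
  have hp := one_lt_natCast_of_prime p
  have hnorm : ‖(p : ℚ_[p])⁻¹‖ = p := by rw [norm_inv, Padic.norm_p, inv_inv]
  refine (measure_ball_pos _ (p : ℚ_[p])⁻¹ one_pos).trans_le (measure_mono fun y hy => ?_)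
  have hy : ‖y‖ = p := by
    rw [← hnorm]
    exact Padic.norm_eq_of_norm_sub_lt_right (hnorm ▸ (mem_ball_iff_norm.1 hy).trans hp)
  refine ⟨hy ▸ hp, hy.trans_le ?_⟩
  simpa using zpow_le_zpow_right₀ hp.le (by omega : (1 : ℤ) ≤ -r)

variable {p r} {α : ℝ}

lemma integrableOn_Kfun_padicAnnulus (hα : 0 < α) :
    IntegrableOn (Kfun p r α) (padicAnnulus p r) (μp p) :=
  Measure.integrableOn_of_bounded (measure_padicAnnulus_lt_top p r).ne
    (measurable_Kfun r).aestronglyMeasurable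
    (ae_restrict_of_forall_mem (measurableSet_padicAnnulus p r) fun _ hy =>
      (Real.norm_eq_abs _).trans_le (abs_Kfun_le r hα hy.1.le))

lemma setIntegral_Kfun_padicAnnulus_neg (hr : r < 0) (hα : 0 < α) :
    ∫ y in padicAnnulus p r, Kfun p r α y ∂(μp p) < 0 := by
  have hp := one_lt_natCast_of_prime p
  have hneg : (p : ℝ) ^ ((r : ℝ) * (α + 1)) * (1 - (p : ℝ) ^ α) < 0 :=
    mul_neg_of_pos_of_neg (Real.rpow_pos_of_pos (by linarith) _)
      (by linarith [Real.one_lt_rpow hp hα])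
  calc ∫ y in padicAnnulus p r, Kfun p r α y ∂(μp p)
      ≤ ∫ _ in padicAnnulus p r, (p : ℝ) ^ ((r : ℝ) * (α + 1)) * (1 - (p : ℝ) ^ α) ∂(μp p) :=
        setIntegral_mono_on (integrableOn_Kfun_padicAnnulus hα)
          (integrableOn_const (measure_padicAnnulus_lt_top p r).ne)
          (measurableSet_padicAnnulus p r) fun y hy =>
            Kfun_le_of_norm_le r hα (zero_lt_one.trans hy.1) hy.2
    _ < 0 := by
        rw [setIntegral_const, smul_eq_mul]
        exact mul_neg_of_pos_of_neg (ENNReal.toReal_pos (measure_padicAnnulus_pos p r hr).ne'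
          (measure_padicAnnulus_lt_top p r).ne) hneg

end Annulus

section LaplaceTransform

variable {p : ℕ} [Fact p.Prime] {χ : AddChar ℚ_[p] ℂ} {r : ℤ} {α : ℝ}

lemma Gr_eq_setIntegral_resolventIntegrand (s : ℝ) :
    Gr p χ r α s = ∫ y in padicAnnulus p r, (Kfun p r α y : ℂ) *
      ∫ ξ in closedBall 0 1, resolventIntegrand χ r α s y ξ ∂(μp p) ∂(μp p) := by
  rw [Gr, show {ξ : ℚ_[p] | ‖ξ‖ ≤ 1} = closedBall 0 1 by ext; simp]
  rfl

lemma exists_norm_Gr_sub_le (hχ : ∀ y : ℚ_[p], ‖y‖ ≤ 1 → χ y = 1) (hr : r ≤ 0) (hα : 0 < α) :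
    ∃ M, ∀ s > 0, ‖Gr p χ r α s - (((∫ y in padicAnnulus p r, Kfun p r α y ∂(μp p))
      * (μp p).real (closedBall 0 ((p : ℝ) ^ r)) / s : ℝ) : ℂ)‖ ≤ M := by
  set c := (μp p).real (closedBall 0 ((p : ℝ) ^ r))
  set MK := |(1 - (p : ℝ) ^ α) / (1 - (p : ℝ) ^ (-α - 1))|
      + |(p : ℝ) ^ ((r : ℝ) * (α + 1)) * (1 - (p : ℝ) ^ α) / (1 - (p : ℝ) ^ (α + 1))|
  set MR := (((p : ℝ) ^ (r + 1)) ^ α - (p : ℝ) ^ ((r : ℝ) * α))⁻¹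
      * (μp p).real (closedBall 0 1 \ closedBall 0 ((p : ℝ) ^ r))
  refine ⟨MK * MR * (μp p).real (padicAnnulus p r), fun s hs => ?_⟩
  set innerIntegral := fun y => ∫ ξ in closedBall 0 1, resolventIntegrand χ r α s y ξ ∂(μp p)
  have hK : IntegrableOn (fun y => (Kfun p r α y : ℂ)) (padicAnnulus p r) (μp p) :=
    (integrableOn_Kfun_padicAnnulus hα).ofReal
  have hKinner : IntegrableOn (fun y => (Kfun p r α y : ℂ) * innerIntegral y)
      (padicAnnulus p r) (μp p) :=
    hK.mul_continuousOn_of_subset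
      (continuous_parametric_integral_of_continuous
        (continuous_resolventIntegrand hχ r hα.le hs) (isCompact_closedBall 0 1)).continuousOn
      (measurableSet_padicAnnulus p r) (isCompact_closedBall 0 _)
      (padicAnnulus_subset_closedBall p r)
  have hsplit : Gr p χ r α s - (((∫ y in padicAnnulus p r, Kfun p r α y ∂(μp p)) * c / s : ℝ) : ℂ)
      = ∫ y in padicAnnulus p r,
          (Kfun p r α y : ℂ) * (innerIntegral y - ((c / s : ℝ) : ℂ)) ∂(μp p) := by
    simp_rw [mul_sub]
    rw [integral_sub hKinner (hK.mul_const _), integral_mul_const, integral_complex_ofReal,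
      Gr_eq_setIntegral_resolventIntegrand]
    push_cast
    ring
  rw [hsplit]
  refine norm_setIntegral_le_of_norm_le_const (measure_padicAnnulus_lt_top p r) fun y hy => ?_
  rw [norm_mul, Complex.norm_real, Real.norm_eq_abs]
  exact mul_le_mul (abs_Kfun_le r hα hy.1.le)
    (norm_setIntegral_resolventIntegrand_sub_le hχ r hr hα hs hy.2) (norm_nonneg _)
    (by positivity)

end LaplaceTransform

theorem stmt16 (χ : AddChar ℚ_[p] ℂ) (hχ : ∀ y : ℚ_[p], χ y = 1 ↔ ‖y‖ ≤ 1) (r : ℤ) (hr : r < 0) (α : ℝ) (hα : 0 < α) :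
    Tendsto (fun s : ℝ => ‖Gr p χ r α s‖) (𝓝[>] (0:ℝ)) atTop ∧
    Tendsto (fun s : ℝ => Gr p χ r α s / (1 + Gr p χ r α s)) (𝓝[>] (0:ℝ)) (𝓝 1) := by
  have hc : 0 < (μp p).real (closedBall 0 ((p : ℝ) ^ r)) :=
    ENNReal.toReal_pos (measure_closedBall_pos _ 0 (zpow_pos (Nat.cast_pos.2
      (Fact.out : p.Prime).pos) r)).ne' measure_closedBall_lt_top.ne
  obtain ⟨M, hM⟩ := exists_norm_Gr_sub_le (fun y => (hχ y).2) hr.le hα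
  have hGr : Tendsto (Gr p χ r α) (𝓝[>] 0) (cobounded ℂ) :=
    tendsto_cobounded_of_norm_sub_le
      (tendsto_ofReal_div_nhdsGT_zero_cobounded
        (mul_neg_of_neg_of_pos (setIntegral_Kfun_padicAnnulus_neg hr hα) hc).ne)
      (eventually_nhdsWithin_of_forall hM)
  exact ⟨tendsto_norm_atTop_iff_cobounded.2 hGr, tendsto_div_one_add_self_of_tendsto_cobounded hGr⟩

end
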